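/- Let μ be a volume form on an oriented 4-manifold M, F, G smooth functions, and π the bivector defined by π(dg,dh)·μ = dg∧dh∧dF∧dG. Then [π, π]_N = 0, i.e. π is a Poisson bivector. -/

import Mathlib

open scoped BigOperators

/-- The partial derivative ∂f/∂xⁱ at x. -/
noncomputable def pd (f : (Fin 4 → ℝ) → ℝ) (i : Fin 4) (x : Fin 4 → ℝ) : ℝ :=
  fderiv ℝ f x (Pi.single i 1)

/-- The Levi-Civita symbol ε_{ijrs} on four indices. -/
noncomputable def eps (i j r s : Fin 4) : ℝ :=
  ∏ p ∈ Finset.univ.filter (fun p : Fin 4 × Fin 4 => p.1 < p.2),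
    Real.sign ((![i,j,r,s] p.2 : ℝ) - (![i,j,r,s] p.1 : ℝ))

/-- sign helper -/
noncomputable def s4 (a b : Fin 4) : ℝ := if a < b then 1 else if b < a then -1 else 0

lemma sign_fin (a b : Fin 4) : Real.sign ((b:ℝ) - (a:ℝ)) = s4 a b := by
  unfold s4
  rcases lt_trichotomy a b with h | h | h
  · rw [if_pos h, Real.sign_of_pos]
    have : (a:ℝ) < (b:ℝ) := by exact_mod_cast h
    linarith
  · subst h; simp [Real.sign_zero]
  · rw [if_neg (not_lt.2 h.le), if_pos h, Real.sign_of_neg]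
    have : (b:ℝ) < (a:ℝ) := by exact_mod_cast h
    linarith

lemma eps_expand (i j r s : Fin 4) :
    eps i j r s = s4 i j * s4 i r * s4 j r * s4 i s * s4 j s * s4 r s := by
  rw [eps, Finset.prod_filter, ← Finset.univ_product_univ, Finset.prod_product]
  simp (config := { decide := true }) only [Fin.prod_univ_four, sign_fin,
    Matrix.cons_val_zero, Matrix.cons_val_one, Matrix.head_cons, Matrix.cons_val_two,
    Matrix.tail_cons, Matrix.cons_val_three, if_true, if_false]
  ring

/-! ### Calculus lemmas for `pd` -/

lemma pd_contDiff {F : (Fin 4 → ℝ) → ℝ} (hF : ContDiff ℝ (⊤ : ℕ∞) F) (r : Fin 4) :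
    ContDiff ℝ (⊤ : ℕ∞) (pd F r) := by
  have h1 : ContDiff ℝ (⊤ : ℕ∞) (fderiv ℝ F) := hF.fderiv_right (by simp)
  exact h1.clm_apply contDiff_const

lemma pd_pd_symm {F : (Fin 4 → ℝ) → ℝ} (hF : ContDiff ℝ (⊤ : ℕ∞) F) (l r : Fin 4) (x : Fin 4 → ℝ) :
    pd (pd F r) l x = pd (pd F l) r x := by
  have hsymm : IsSymmSndFDerivAt ℝ F x := by
    apply ContDiffAt.isSymmSndFDerivAt (n := 2) _ (by simp)
    exact (hF.of_le (WithTop.coe_le_coe.2 (le_top : (2:ℕ∞) ≤ ⊤))).contDiffAt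
  have hd : DifferentiableAt ℝ (fderiv ℝ F) x :=
    ((hF.fderiv_right (m := 1) (WithTop.coe_le_coe.2 le_top)).differentiable (by simp)).differentiableAt
  have key : ∀ v w : Fin 4 → ℝ,
      fderiv ℝ (fun y => fderiv ℝ F y w) x v = fderiv ℝ (fderiv ℝ F) x v w := by
    intro v w
    rw [fderiv_clm_apply hd (differentiableAt_const w)]
    simp
  unfold pd
  rw [key, key, hsymm]

lemma pd_mul {f g : (Fin 4 → ℝ) → ℝ} {x : Fin 4 → ℝ} (hf : DifferentiableAt ℝ f x)
    (hg : DifferentiableAt ℝ g x) (l : Fin 4) :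
    pd (fun y => f y * g y) l x = pd f l x * g x + f x * pd g l x := by
  unfold pd
  rw [fderiv_fun_mul hf hg]
  simp [smul_eq_mul]
  ring

lemma pd_const_mul {f : (Fin 4 → ℝ) → ℝ} {x : Fin 4 → ℝ} (hf : DifferentiableAt ℝ f x)
    (c : ℝ) (l : Fin 4) :
    pd (fun y => c * f y) l x = c * pd f l x := by
  unfold pd
  rw [fderiv_const_mul hf]
  simp

lemma pd_inv {g : (Fin 4 → ℝ) → ℝ} {x : Fin 4 → ℝ} (hg : DifferentiableAt ℝ g x)
    (hg0 : g x ≠ 0) (l : Fin 4) :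
    pd (fun y => (g y)⁻¹) l x = -pd g l x * ((g x)^2)⁻¹ := by
  unfold pd
  rw [show (fun y => (g y)⁻¹) = Inv.inv ∘ g from rfl,
    fderiv_comp x (differentiableAt_inv hg0) hg, fderiv_inv' hg0]
  simp [ContinuousLinearMap.mulLeftRight_apply]
  rw [sq, mul_inv]
  ring

lemma pd_sum {ι : Type*} (S : Finset ι) (f : ι → (Fin 4 → ℝ) → ℝ) {x : Fin 4 → ℝ}
    (hf : ∀ i ∈ S, DifferentiableAt ℝ (f i) x) (l : Fin 4) :
    pd (fun y => ∑ i ∈ S, f i y) l x = ∑ i ∈ S, pd (f i) l x := by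
  unfold pd
  rw [fderiv_fun_sum hf]
  simp

/-! ### Algebraic core -/

noncomputable def Qc (a b : Fin 4 → ℝ) (i j : Fin 4) : ℝ := ∑ r, ∑ s, eps i j r s * a r * b s
noncomputable def Dc (a b : Fin 4 → ℝ) (A B : Fin 4 → Fin 4 → ℝ) (l j m : Fin 4) : ℝ :=
  ∑ r, ∑ s, eps j m r s * (A l r * b s + a r * B l s)

set_option maxHeartbeats 1000000 in
theorem key (a b c : Fin 4 → ℝ) (A B : Fin 4 → Fin 4 → ℝ)
    (hA : ∀ l r, A l r = A r l) (hB : ∀ l s, B l s = B s l) (R : ℝ) (i j m : Fin 4) :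
    ∑ l, (Qc a b l i * (R * Dc a b A B l j m - Qc a b j m * c l)
      + Qc a b l j * (R * Dc a b A B l m i - Qc a b m i * c l)
      + Qc a b l m * (R * Dc a b A B l i j - Qc a b i j * c l)) = 0 := by
  fin_cases i <;> fin_cases j <;> fin_cases m <;>
    simp (config := { decide := true }) only [Qc, Dc, Fin.sum_univ_four, eps_expand, s4,
    if_true, if_false, mul_zero, zero_mul, mul_one, one_mul, neg_mul, mul_neg, neg_neg,
    add_zero, zero_add, sub_zero, zero_sub, neg_zero]
    <;> (try simp only [hA 1 0, hA 2 0, hA 2 1, hA 3 0, hA 3 1, hA 3 2,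
      hB 1 0, hB 2 0, hB 2 1, hB 3 0, hB 3 1, hB 3 2])
    <;> (try ring)


/- STATEMENT 5: the bivector π defined by π(dg,dh)·μ = dg∧dh∧dF∧dG (μ = ρ·vol) is
Poisson: [π,π]_N = 0.  In components this Schouten–Nijenhuis condition is the vanishing
of the Jacobiator Σ_l (π^{li}∂_l π^{jm} + π^{lj}∂_l π^{mi} + π^{lm}∂_l π^{ij}).
The components of π are pinned by π^{ij}·ρ = Σ_{r,s} ε_{ijrs} ∂_r F ∂_s G. -/
set_option maxHeartbeats 1000000 in
theorem jacobian_bivector_is_Poisson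
    (F G ρ : (Fin 4 → ℝ) → ℝ)
    (hF : ContDiff ℝ (⊤ : ℕ∞) F) (hG : ContDiff ℝ (⊤ : ℕ∞) G)
    (hρ : ContDiff ℝ (⊤ : ℕ∞) ρ) (hρ0 : ∀ x, ρ x ≠ 0)
    (P : (Fin 4 → ℝ) → Fin 4 → Fin 4 → ℝ)
    (hdefP : ∀ x i j, P x i j * ρ x = ∑ r, ∑ s, eps i j r s * pd F r x * pd G s x) :
    ∀ x i j m, ∑ l,
      (P x l i * pd (fun y => P y j m) l x +
       P x l j * pd (fun y => P y m i) l x +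
       P x l m * pd (fun y => P y i j) l x) = 0 := by
  intro x i j m
  have hFd : ∀ r, Differentiable ℝ (pd F r) := fun r => (pd_contDiff hF r).differentiable (by simp)
  have hGd : ∀ s, Differentiable ℝ (pd G s) := fun s => (pd_contDiff hG s).differentiable (by simp)
  have hρd : Differentiable ℝ ρ := hρ.differentiable (by simp)
  -- the numerator function
  set Qf : Fin 4 → Fin 4 → (Fin 4 → ℝ) → ℝ :=
    fun u v y => Qc (fun r => pd F r y) (fun s => pd G s y) u v with hQf
  have hQfd : ∀ u v, Differentiable ℝ (Qf u v) := by
    intro u v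
    apply Differentiable.fun_sum; intro r _
    apply Differentiable.fun_sum; intro s _
    exact (((hFd r).const_mul (eps u v r s)).mul (hGd s))
  -- P as a function equals Qf * ρ⁻¹
  have hP : ∀ u v, (fun y => P y u v) = fun y => Qf u v y * (ρ y)⁻¹ := by
    intro u v
    funext y
    have h := hdefP y u v
    field_simp [hρ0 y]
    rw [h]; rfl
  -- derivative of Qf
  have hpdQ : ∀ u v l, pd (Qf u v) l x =
      Dc (fun r => pd F r x) (fun s => pd G s x)
         (fun l' r => pd (pd F r) l' x) (fun l' s => pd (pd G s) l' x) l u v := by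
    intro u v l
    simp only [hQf, Qc, Dc]
    rw [pd_sum _ _ (fun r _ => by
      exact (Differentiable.fun_sum (fun s _ =>
        ((hFd r).const_mul (eps u v r s)).mul (hGd s))).differentiableAt)]
    refine Finset.sum_congr rfl (fun r _ => ?_)
    rw [pd_sum _ _ (fun s _ => (((hFd r).const_mul (eps u v r s)).fun_mul (hGd s)).differentiableAt)]
    refine Finset.sum_congr rfl (fun s _ => ?_)
    have hrw : (fun y => eps u v r s * pd F r y * pd G s y)
        = fun y => eps u v r s * (pd F r y * pd G s y) := by funext y; ring
    rw [hrw, pd_const_mul (((hFd r) x).fun_mul ((hGd s) x)),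
        pd_mul ((hFd r) x) ((hGd s) x)]
  -- derivative of P
  have hpdP : ∀ u v l, pd (fun y => P y u v) l x =
      pd (Qf u v) l x * (ρ x)⁻¹ + Qf u v x * (-pd ρ l x * ((ρ x)^2)⁻¹) := by
    intro u v l
    rw [hP u v, pd_mul ((hQfd u v) x) ((hρd x).fun_inv (hρ0 x)),
        pd_inv (hρd x) (hρ0 x)]
  -- value of P
  have hPval : ∀ u v, P x u v = Qf u v x * (ρ x)⁻¹ := fun u v => congrFun (hP u v) x
  -- abbreviations
  set a : Fin 4 → ℝ := fun r => pd F r x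
  set b : Fin 4 → ℝ := fun s => pd G s x
  set A : Fin 4 → Fin 4 → ℝ := fun l' r => pd (pd F r) l' x
  set B : Fin 4 → Fin 4 → ℝ := fun l' s => pd (pd G s) l' x
  set c : Fin 4 → ℝ := fun l' => pd ρ l' x
  set R : ℝ := ρ x with hR
  have hRne : R ≠ 0 := hρ0 x
  have hQfx : ∀ u v, Qf u v x = Qc a b u v := fun u v => rfl
  -- rewrite the goal
  calc ∑ l, (P x l i * pd (fun y => P y j m) l x +
       P x l j * pd (fun y => P y m i) l x +
       P x l m * pd (fun y => P y i j) l x)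
      = ∑ l, ((R⁻¹ * (R^2)⁻¹) *
          (Qc a b l i * (R * Dc a b A B l j m - Qc a b j m * c l)
         + Qc a b l j * (R * Dc a b A B l m i - Qc a b m i * c l)
         + Qc a b l m * (R * Dc a b A B l i j - Qc a b i j * c l))) := by
        refine Finset.sum_congr rfl (fun l _ => ?_)
        rw [hpdP, hpdP, hpdP, hPval, hPval, hPval, hpdQ, hpdQ, hpdQ]
        simp only [hQfx]
        field_simp
        ring
    _ = (R⁻¹ * (R^2)⁻¹) * ∑ l,
          (Qc a b l i * (R * Dc a b A B l j m - Qc a b j m * c l)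
         + Qc a b l j * (R * Dc a b A B l m i - Qc a b m i * c l)
         + Qc a b l m * (R * Dc a b A B l i j - Qc a b i j * c l)) := by
        rw [Finset.mul_sum]
    _ = 0 := by
        rw [key a b c A B (fun l' r => pd_pd_symm hF l' r x)
          (fun l' s => pd_pd_symm hG l' s x) R i j m, mul_zero]
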